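/- Let G=(V,E) be a DAG, let u,v,x be distinct vertices, and let W ⊆ V∖{u,v,x}. If u and v are d-separated given W in G but d-connected given W∪{x} in G, then x ̸⇝ u, x ̸⇝ v, and x ̸⇝ w for every w ∈ W; that is, for every DAG G' Markov equivalent to G, x is not an ancestor in G' of u, of v, or of any element of W. -/

import Mathlib

/-! Basic graphical-model definitions: DAGs as binary relations on a finite
vertex type, d-separation via paths (lists of vertices), Markov equivalence,
and definite (non-)ancestral relations. -/

variable {V : Type*}

/-- Two nodes are adjacent in the digraph `E` if there is an edge between them
in either direction. -/
def Adjacent (E : V → V → Prop) (a b : V) : Prop := E a b ∨ E b a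

/-- A digraph is acyclic if it has no directed cycles. -/
def Acyclic (E : V → V → Prop) : Prop := ∀ v : V, ¬ Relation.TransGen E v v

/-- `u` is an ancestor of `v`: there is a directed path from `u` to `v`
(by convention, `v` is an ancestor of itself). -/
def Anc (E : V → V → Prop) (u v : V) : Prop := Relation.ReflTransGen E u v

/-- A list of vertices is a path in the skeleton of `E`: consecutive vertices
are adjacent and no vertex repeats. -/
def IsPath (E : V → V → Prop) (p : List V) : Prop :=
  p.Nodup ∧ List.Chain' (Adjacent E) p

/-- A path `p` is d-connecting given the conditioning set `C` if every collider
on it is an ancestor of an element of `C` and every non-collider on it is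
outside `C`.  Interior vertices of `p` are exactly the middle elements `x` of
consecutive triples `[a, x, b]` of `p`; such an `x` is a collider when both
incident edges point into it. -/
def IsDConnectingPath (E : V → V → Prop) (C : Set V) (p : List V) : Prop :=
  ∀ a x b : V, [a, x, b] <:+: p →
    ((E a x ∧ E b x) → ∃ c ∈ C, Anc E x c) ∧ (¬ (E a x ∧ E b x) → x ∉ C)

/-- `u` and `v` are d-connected given `C` in `E`. -/
def DConn (E : V → V → Prop) (C : Set V) (u v : V) : Prop :=
  ∃ p : List V, IsPath E p ∧ p.head? = some u ∧ p.getLast? = some v ∧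
    IsDConnectingPath E C p

/-- `u` and `v` are d-separated given `C` in `E`. -/
def DSep (E : V → V → Prop) (C : Set V) (u v : V) : Prop := ¬ DConn E C u v

/-- Two DAGs on the same vertex set are Markov equivalent if they have exactly
the same d-separation relations. -/
def MarkovEquiv (E E' : V → V → Prop) : Prop :=
  ∀ (u v : V) (C : Set V), u ≠ v → u ∉ C → v ∉ C → (DSep E C u v ↔ DSep E' C u v)

/-- `u` is definite ancestral to `v` (`u ⇝ v`): `u` is an ancestor of `v` in
every DAG Markov equivalent to `E`. -/
def DefAnc (E : V → V → Prop) (u v : V) : Prop :=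
  ∀ E' : V → V → Prop, Acyclic E' → MarkovEquiv E E' → Anc E' u v

/-- `u` is definite non-ancestral to `v` (`u ̸⇝ v`): `u` is not an ancestor of
`v` in any DAG Markov equivalent to `E`. -/
def DefNonAnc (E : V → V → Prop) (u v : V) : Prop :=
  ∀ E' : V → V → Prop, Acyclic E' → MarkovEquiv E E' → ¬ Anc E' u v

/-- The CPDAG of `E` has a directed edge `a → b` iff `a` and `b` are adjacent
and the edge is oriented `a → b` in every member of the Markov equivalence
class of `E`. -/
def CPDAGDir (E : V → V → Prop) (a b : V) : Prop :=
  Adjacent E a b ∧ ∀ E' : V → V → Prop, Acyclic E' → MarkovEquiv E E' → E' a b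

/-- A possibly directed path in the CPDAG of `E`: a path in the skeleton such
that no edge on it is directed backwards (as `x_{i+1} → x_i`) in the CPDAG. -/
def IsPossiblyDirectedPath (E : V → V → Prop) (p : List V) : Prop :=
  p.Nodup ∧ List.Chain' (fun a b => Adjacent E a b ∧ ¬ CPDAGDir E b a) p

/-- A path is unshielded if no three consecutive vertices on it are pairwise
adjacent. -/
def UnshieldedPath (E : V → V → Prop) (p : List V) : Prop :=
  ∀ a x b : V, [a, x, b] <:+: p → ¬ Adjacent E a b

/-! The hypotheses are d-separation statements, so they hold in every DAG Markov equivalent to the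
given one, and it suffices to argue in a single DAG. Let `p` be a path d-connecting `u` and `v`
given `W ∪ {x}`. Every triple of `p` that fails to be d-connecting given `W` is a collider `c` that
is an ancestor of `x` but of no vertex of `W`; take the one nearest to `v`, so that the segment of
`p` from `c` to `v` is d-connecting given `W`. If `x` were an ancestor of `u`, a directed path
`c → ⋯ → u` would avoid `W`; following it backwards from `u` to its last vertex on that segment and
then the segment to `v` gives a path d-connecting `u` and `v` given `W`. If `x` is an ancestor of
some `w ∈ W`, then `p` itself d-connects `u` and `v` given `W`. -/

namespace List

variable {α : Type*}

theorem triple_infix_append_cons {l₁ l₂ : List α} {a b c y : α}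
    (h : [a, b, c] <:+: l₁ ++ y :: l₂) : [a, b, c] <:+: y :: l₂ ∨ [a, b] <:+: l₁ ++ [y] := by
  induction l₁ with
  | nil => exact Or.inl h
  | cons d l₁ ih =>
    rcases infix_cons_iff.mp h with ⟨t, ht⟩ | h
    · right
      cases l₁ with
      | nil =>
        simp only [append_eq, cons_append, nil_append, cons.injEq] at ht
        obtain ⟨rfl, rfl, -⟩ := ht
        exact infix_refl _
      | cons e l₁ =>
        simp only [append_eq, cons_append, nil_append, cons.injEq] at ht
        obtain ⟨rfl, rfl, -⟩ := ht
        exact (prefix_append [a, b] _).isInfix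
    · exact (ih h).imp_right fun h => h.trans (suffix_cons d _).isInfix

end List

open List

section DSeparation

variable {E E' : V → V → Prop} {C W : Set V} {a b u v w x z : V} {p : List V}

theorem List.IsChain.nodup_of_acyclic (hE : Acyclic E) (hp : IsChain E p) : p.Nodup := by
  have : IsTrans V (Relation.TransGen E) := ⟨fun _ _ _ => Relation.TransGen.trans⟩
  have hp' : IsChain (Relation.TransGen E) p := hp.imp fun _ _ => Relation.TransGen.single
  refine (isChain_iff_pairwise.mp hp').imp ?_
  rintro a _ hab rfl
  exact hE a hab

theorem List.IsChain.anc_of_mem {r : List V} (hr : IsChain E (a :: r)) (hz : z ∈ a :: r) :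
    Anc E a z :=
  hr.induction (Anc E a) _ (fun _ _ h ha => ha.tail h) (fun _ => .refl) z hz

theorem IsPath.suffix {q : List V} (hp : IsPath E p) (h : q <:+ p) : IsPath E q :=
  ⟨hp.1.sublist h.sublist, hp.2.suffix h⟩

def IsDConnectingAt (E : V → V → Prop) (C : Set V) (a z b : V) : Prop :=
  ((E a z ∧ E b z) → ∃ c ∈ C, Anc E z c) ∧ (¬ (E a z ∧ E b z) → z ∉ C)

theorem isDConnectingPath_iff :
    IsDConnectingPath E C p ↔ ∀ a z b, [a, z, b] <:+: p → IsDConnectingAt E C a z b :=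
  Iff.rfl

theorem IsDConnectingAt.of_edge_out (hE : Acyclic E) (hza : E z a) (hz : z ∉ C) :
    IsDConnectingAt E C a z b :=
  ⟨fun hcol => absurd ((Relation.TransGen.single hza).tail hcol.1) (hE z), fun _ => hz⟩

theorem IsDConnectingAt.of_union_singleton (h : IsDConnectingAt E (W ∪ {x}) a z b)
    (hx : Anc E z x → ∃ w ∈ W, Anc E z w) : IsDConnectingAt E W a z b := by
  refine ⟨fun hcol => ?_, fun hn hzW => h.2 hn (Or.inl hzW)⟩
  obtain ⟨c, hc | rfl, hzc⟩ := h.1 hcol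
  exacts [⟨c, hc, hzc⟩, hx hzc]

theorem IsDConnectingAt.anc_of_union_singleton (h : IsDConnectingAt E (W ∪ {x}) a z b)
    (hW : ¬ IsDConnectingAt E W a z b) : Anc E z x ∧ ∀ w ∈ W, ¬ Anc E z w := by
  have := mt h.of_union_singleton hW
  push Not at this
  exact this

theorem IsDConnectingPath.infix {q : List V} (hp : IsDConnectingPath E C p) (h : q <:+: p) :
    IsDConnectingPath E C q :=
  fun a z b hq => hp a z b (hq.trans h)

theorem DConn.symm (h : DConn E C u v) : DConn E C v u := by
  obtain ⟨p, ⟨hnd, hch⟩, hpu, hpv, hp⟩ := h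
  refine ⟨p.reverse, ⟨nodup_reverse.mpr hnd, isChain_reverse.mpr (hch.imp fun _ _ => Or.symm)⟩,
    by rwa [head?_reverse], by rwa [getLast?_reverse], fun a z b h => ?_⟩
  have := hp b z a (reverse_infix.mp (by simpa using h))
  exact ⟨fun hcol => this.1 hcol.symm, fun hn => this.2 fun hcol => hn hcol.symm⟩

theorem MarkovEquiv.dConn_iff (h : MarkovEquiv E E') (huv : u ≠ v) (hu : u ∉ C) (hv : v ∉ C) :
    DConn E C u v ↔ DConn E' C u v :=
  not_iff_not.mp (h u v C huv hu hv)

theorem DConn.of_union_singleton_of_anc (h : DConn E (W ∪ {x}) u v) (hw : w ∈ W)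
    (hxw : Anc E x w) : DConn E W u v := by
  obtain ⟨p, hp, hpu, hpv, hpx⟩ := h
  exact ⟨p, hp, hpu, hpv, fun a z b h =>
    IsDConnectingAt.of_union_singleton (hpx a z b h) fun hzx => ⟨w, hw, hzx.trans hxw⟩⟩

theorem exists_suffix_isDConnectingPath (hp : IsDConnectingPath E (W ∪ {x}) p)
    (hW : ¬ IsDConnectingPath E W p) :
    ∃ c q, c :: q <:+ p ∧ Anc E c x ∧ (∀ w ∈ W, ¬ Anc E c w) ∧ IsDConnectingPath E W (c :: q) := by
  induction p with
  | nil => exact absurd (fun a z b h => by simp at h) hW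
  | cons d p ih =>
    by_cases hpW : IsDConnectingPath E W p
    · rw [isDConnectingPath_iff] at hW
      push Not at hW
      obtain ⟨a, z, b, hazb, hfail⟩ := hW
      rcases infix_cons_iff.mp hazb with ⟨t, ht⟩ | hin
      · simp only [cons_append, cons.injEq] at ht
        obtain ⟨rfl, rfl⟩ := ht
        obtain ⟨hzx, hzW⟩ := IsDConnectingAt.anc_of_union_singleton (hp a z b hazb) hfail
        exact ⟨z, b :: t, suffix_cons _ _, hzx, hzW, hpW⟩
      · exact absurd (hpW a z b hin) hfail
    · obtain ⟨c, q, hq, h⟩ := ih (hp.infix (suffix_cons d p).isInfix) hpW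
      exact ⟨c, q, hq.trans (suffix_cons d p), h⟩

theorem dConn_of_isChain_append_isPath (hE : Acyclic E) {y : V} {t s : List V}
    (hr : IsChain E (y :: t)) (hru : (y :: t).getLast? = some u) (hrW : ∀ z ∈ y :: t, z ∉ W)
    (hq : IsPath E (y :: s)) (hqv : (y :: s).getLast? = some v)
    (hqW : IsDConnectingPath E W (y :: s)) (hdisj : ∀ z ∈ t, z ∉ y :: s) : DConn E W u v := by
  have hrev : (y :: t).reverse = t.reverse ++ [y] := reverse_cons
  have hnd : t.reverse.Nodup := nodup_reverse.mpr (hr.nodup_of_acyclic hE).of_cons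
  have hch : IsChain (Adjacent E) (t.reverse ++ [y] ++ s) :=
    (hrev ▸ isChain_reverse.mpr (hr.imp fun _ _ => Or.inr)).append_overlap hq.2 (cons_ne_nil _ _)
  refine ⟨t.reverse ++ y :: s, ⟨?_, by rwa [append_assoc] at hch⟩, ?_, ?_, fun a z b h => ?_⟩
  · exact nodup_append.mpr ⟨hnd, hq.1, fun z hz _ hz' h => hdisj z (mem_reverse.mp hz) (h ▸ hz')⟩
  · rwa [← singleton_append, ← append_assoc, ← hrev, head?_append_of_ne_nil _ (by simp),
      head?_reverse]
  · rwa [getLast?_append_cons]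
  rcases triple_infix_append_cons h with h | h
  · exact hqW a z b h
  · have hza : [z, a] <:+: y :: t := reverse_infix.mp (by simpa [hrev] using h)
    exact IsDConnectingAt.of_edge_out hE (isChain_pair.mp (hr.infix hza))
      (hrW z (hza.subset (by simp)))

theorem dConn_of_isChain_of_isPath (hE : Acyclic E) {r q : List V} (hr : IsChain E r)
    (hru : r.getLast? = some u) (hrW : ∀ z ∈ r, z ∉ W) (hrq : ∃ z ∈ r, z ∈ q) (hq : IsPath E q)
    (hqv : q.getLast? = some v) (hqW : IsDConnectingPath E W q) : DConn E W u v := by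
  induction r with
  | nil => simp at hrq
  | cons y t ih =>
    by_cases ht : ∃ z ∈ t, z ∈ q
    · obtain ⟨z, t', rfl⟩ := exists_cons_of_ne_nil (by rintro rfl; simp at ht : t ≠ [])
      exact ih hr.tail (by rwa [getLast?_cons_cons] at hru)
        (fun z hz => hrW z (mem_cons_of_mem y hz)) ht
    · -- `y` is the last vertex of the directed path on `q`
      have hy : y ∈ q := by
        obtain ⟨z, hz, hzq⟩ := hrq
        rcases mem_cons.mp hz with rfl | hz
        exacts [hzq, absurd ⟨z, hz, hzq⟩ ht]
      obtain ⟨q₁, s, rfl⟩ := append_of_mem hy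
      have hsuf : y :: s <:+ q₁ ++ y :: s := suffix_append _ _
      exact dConn_of_isChain_append_isPath hE hr hru hrW (hq.suffix hsuf)
        (by rwa [getLast?_append_cons] at hqv) (hqW.infix hsuf.isInfix)
        fun z hz hzs => ht ⟨z, hz, hsuf.subset hzs⟩

theorem not_anc_left_of_dSep_of_dConn_union (hE : Acyclic E) (hsep : DSep E W u v)
    (hconn : DConn E (W ∪ {x}) u v) : ¬ Anc E x u := by
  intro hxu
  obtain ⟨p, hp, hpu, hpv, hpx⟩ := hconn
  obtain ⟨c, q, ⟨p₁, rfl⟩, hcx, hcW, hqW⟩ :=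
    exists_suffix_isDConnectingPath hpx fun hpW => hsep ⟨p, hp, hpu, hpv, hpW⟩
  obtain ⟨r, hr, hru⟩ := exists_isChain_cons_of_relationReflTransGen (hcx.trans hxu)
  refine hsep (dConn_of_isChain_of_isPath hE hr ?_ (fun z hz hzW => hcW z hzW (hr.anc_of_mem hz))
    ⟨c, mem_cons_self, mem_cons_self⟩ (hp.suffix (suffix_append _ _)) ?_ hqW)
  · rw [getLast?_eq_some_getLast (cons_ne_nil _ _), hru]
  · rwa [getLast?_append_cons] at hpv

theorem not_anc_of_dSep_of_dConn_union (hE : Acyclic E) (hsep : DSep E W u v)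
    (hconn : DConn E (W ∪ {x}) u v) : ¬ Anc E x u ∧ ¬ Anc E x v ∧ ∀ w ∈ W, ¬ Anc E x w :=
  ⟨not_anc_left_of_dSep_of_dConn_union hE hsep hconn,
    not_anc_left_of_dSep_of_dConn_union hE (fun h => hsep h.symm) hconn.symm,
    fun _ hw hxw => hsep (hconn.of_union_singleton_of_anc hw hxw)⟩

end DSeparation

theorem stmt3_general (E : V → V → Prop) (u v x : V) (W : Set V)
    (huv : u ≠ v) (hux : u ≠ x) (hvx : v ≠ x)
    (hWu : u ∉ W) (hWv : v ∉ W)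
    (hsep : DSep E W u v) (hconn : DConn E (W ∪ {x}) u v) :
    DefNonAnc E x u ∧ DefNonAnc E x v ∧ ∀ w ∈ W, DefNonAnc E x w := by
  have hu : u ∉ W ∪ {x} := by simp [hWu, hux]
  have hv : v ∉ W ∪ {x} := by simp [hWv, hvx]
  have h : ∀ E', Acyclic E' → MarkovEquiv E E' →
      ¬ Anc E' x u ∧ ¬ Anc E' x v ∧ ∀ w ∈ W, ¬ Anc E' x w := fun E' hE' hEE' =>
    not_anc_of_dSep_of_dConn_union hE' ((hEE' u v W huv hWu hWv).mp hsep)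
      ((hEE'.dConn_iff huv hu hv).mp hconn)
  exact ⟨fun E' hE' hEE' => (h E' hE' hEE').1, fun E' hE' hEE' => (h E' hE' hEE').2.1,
    fun w hw E' hE' hEE' => (h E' hE' hEE').2.2 w hw⟩

/-- Lemma 2, second bullet: if `u, v` are d-separated given
`W` but d-connected given `W ∪ {x}`, then `x ̸⇝ u`, `x ̸⇝ v` and `x ̸⇝ W`. -/
theorem stmt3 [Fintype V] (E : V → V → Prop) (hE : Acyclic E) (u v x : V) (W : Set V)
    (huv : u ≠ v) (hux : u ≠ x) (hvx : v ≠ x)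
    (hWu : u ∉ W) (hWv : v ∉ W) (hWx : x ∉ W)
    (hsep : DSep E W u v) (hconn : DConn E (W ∪ {x}) u v) :
    DefNonAnc E x u ∧ DefNonAnc E x v ∧ ∀ w ∈ W, DefNonAnc E x w :=
  stmt3_general E u v x W huv hux hvx hWu hWv hsep hconn
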